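/- Let γ₁, γ₂ ∈ ℂ be nonzero with γ₁ ≠ γ₂ and γ₁ ≠ −conj(γ₂), and let v₁, v₂, w₁, w₂ ∈ ℂ satisfy (v₁, w₁) ≠ (0,0) and (v₂, w₂) ≠ (0,0). For (x,t) ∈ ℝ² set φ_k := γ_k·t + γ_k⁻¹·x for k = 1, 2. Then for all (x,t) ∈ ℝ²: |γ₁ + conj(γ₂)|² · | v₂·w₁·exp(φ₁) − v₁·w₂·exp(φ₂) |² + |γ₁ − γ₂|² · | v₁·conj(v₂) + w₁·conj(w₂)·exp(φ₁ + conj(φ₂)) |² > 0. (This expresses that the determinant of the matrix Ω associated with the 2-soliton solution never vanishes, so the 2-soliton solution is regular.) -/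

import Mathlib

/-!
If both terms vanished, the vector `(v₁, w₁ e^{φ₁})` would be parallel to `(v₂, w₂ e^{φ₂})` (the
first modulus is their 2 × 2 determinant) and orthogonal to it (the second is their Hermitian
product, as `e^{φ₁ + φ̄₂} = e^{φ₁} · conj e^{φ₂}`). Since `(v₂, w₂ e^{φ₂}) ≠ 0`, this forces
`v₁ = w₁ = 0`. The weights `|γ₁ + γ̄₂|²` and `|γ₁ - γ₂|²` are positive, so the sum is positive.
-/

open ComplexConjugate

theorem eq_zero_of_parallel_of_orthogonal {𝕜 : Type*} [RCLike 𝕜] {a b c d : 𝕜}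
    (hcd : (c, d) ≠ (0, 0)) (hpar : c * b - a * d = 0) (horth : a * conj c + b * conj d = 0) :
    a = 0 ∧ b = 0 := by
  have hS : c * conj c + d * conj d ≠ 0 := by
    rw [RCLike.mul_conj, RCLike.mul_conj]
    norm_cast
    have hcd' : c ≠ 0 ∨ d ≠ 0 := by
      by_contra! h
      exact hcd (by rw [h.1, h.2])
    rcases hcd' with hc | hd <;> positivity
  have ha : a * (c * conj c + d * conj d) = 0 := by
    linear_combination c * horth - conj d * hpar
  have hb : b * (c * conj c + d * conj d) = 0 := by
    linear_combination d * horth + conj c * hpar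
  exact ⟨(mul_eq_zero.1 ha).resolve_right hS, (mul_eq_zero.1 hb).resolve_right hS⟩

theorem stmt_10 (γ₁ γ₂ : ℂ)
    (hne : γ₁ ≠ γ₂) (hne' : γ₁ ≠ -(starRingEnd ℂ) γ₂)
    (v₁ v₂ w₁ w₂ : ℂ) (h1 : (v₁, w₁) ≠ (0, 0)) (h2 : (v₂, w₂) ≠ (0, 0))
    (φ₁ φ₂ : ℂ) :
    0 < Complex.normSq (γ₁ + (starRingEnd ℂ) γ₂) *
          Complex.normSq (v₂ * w₁ * Complex.exp φ₁ - v₁ * w₂ * Complex.exp φ₂)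
        + Complex.normSq (γ₁ - γ₂) *
          Complex.normSq (v₁ * (starRingEnd ℂ) v₂
            + w₁ * (starRingEnd ℂ) w₂ * Complex.exp (φ₁ + (starRingEnd ℂ) φ₂)) := by
  have hplus : γ₁ + conj γ₂ ≠ 0 := fun h ↦ hne' (by linear_combination h)
  have hminus : γ₁ - γ₂ ≠ 0 := sub_ne_zero.2 hne
  rw [Complex.exp_add, Complex.exp_conj]
  have hq : (v₂, w₂ * Complex.exp φ₂) ≠ (0, 0) := by
    simpa [Complex.exp_ne_zero] using h2
  have hAB : v₂ * w₁ * Complex.exp φ₁ - v₁ * w₂ * Complex.exp φ₂ ≠ 0 ∨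
      v₁ * conj v₂ + w₁ * conj w₂ * (Complex.exp φ₁ * conj (Complex.exp φ₂)) ≠ 0 := by
    by_contra! ⟨hA, hB⟩
    obtain ⟨hv₁, hw₁⟩ :=
      eq_zero_of_parallel_of_orthogonal (a := v₁) (b := w₁ * Complex.exp φ₁) hq
        (by linear_combination hA) (by rw [map_mul]; linear_combination hB)
    exact h1 (by simp_all [Complex.exp_ne_zero])
  rcases hAB with hA | hB
  · exact add_pos_of_pos_of_nonneg
      (mul_pos (Complex.normSq_pos.2 hplus) (Complex.normSq_pos.2 hA))
      (mul_nonneg (Complex.normSq_nonneg _) (Complex.normSq_nonneg _))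
  · exact add_pos_of_nonneg_of_pos
      (mul_nonneg (Complex.normSq_nonneg _) (Complex.normSq_nonneg _))
      (mul_pos (Complex.normSq_pos.2 hminus) (Complex.normSq_pos.2 hB))
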